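/- At a point with geodesic normal coordinates, Σ_{μ,ν} g^{kl} π_{μν} ∂_k π_{αμ} ∂_l π_{βν} = [g^{ij} g^{kl} A_{ik} ⊗ A_{jl}]_{αβ}. -/

import Mathlib

/-!
Let `E` be the matrix whose columns are the tangent vectors `∂_i X`, so that `g = EᵀE`,
`π = E g⁻¹ Eᵀ` and `∂_k π = A_k g⁻¹ Eᵀ + E g⁻¹ A_kᵀ`, where `A_k` has columns `A_{ik}` and
`Eᵀ A_k = 0`. Normality gives `∂_k π E = A_k`, and since `π` factors through `E`,
`∂_k π π (∂_l π)ᵀ = (∂_k π E) g⁻¹ (∂_l π E)ᵀ = A_k g⁻¹ A_lᵀ`. Contracting with `g^{kl}` is the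
identity.
-/

open scoped RealInnerProductSpace
open Matrix

theorem Finset.sum_comm_pairs {α β γ δ M : Type*} [Fintype α] [Fintype β] [Fintype γ]
    [Fintype δ] [AddCommMonoid M] (f : α → β → γ → δ → M) :
    ∑ a, ∑ b, ∑ c, ∑ d, f a b c d = ∑ c, ∑ d, ∑ a, ∑ b, f a b c d :=
  calc ∑ a, ∑ b, ∑ c, ∑ d, f a b c d = ∑ a, ∑ c, ∑ d, ∑ b, f a b c d :=
        sum_congr rfl fun _ _ => sum_comm.trans (sum_congr rfl fun _ _ => sum_comm)
    _ = ∑ c, ∑ d, ∑ a, ∑ b, f a b c d :=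
        sum_comm.trans (sum_congr rfl fun _ _ => sum_comm)

theorem Matrix.mul_mul_transpose_apply {R l m n o : Type*} [CommSemiring R] [Fintype m]
    [Fintype n] (M : Matrix l m R) (C : Matrix m n R) (N : Matrix o n R) (a : l) (b : o) :
    (M * C * Nᵀ) a b = ∑ i, ∑ j, M a i * C i j * N b j := by
  simp only [mul_apply, transpose_apply, Finset.sum_mul]
  exact Finset.sum_comm

/-- `g^{kl} X_k Y X_lᵀ`. -/
def contractedSandwich {R m n p : Type*} [CommSemiring R] [Fintype m] [Fintype p]
    (c : Matrix m m R) (X : m → Matrix n p R) (Y : Matrix p p R) : Matrix n n R :=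
  ∑ k, ∑ l, c k l • (X k * Y * (X l)ᵀ)

theorem contractedSandwich_apply {R m n p : Type*} [CommSemiring R] [Fintype m] [Fintype p]
    (c : Matrix m m R) (X : m → Matrix n p R) (Y : Matrix p p R) (a b : n) :
    contractedSandwich c X Y a b = ∑ μ, ∑ ν, ∑ k, ∑ l, c k l * X k a μ * Y μ ν * X l b ν := by
  simp only [contractedSandwich, Matrix.sum_apply, Matrix.smul_apply, smul_eq_mul,
    mul_mul_transpose_apply, Finset.mul_sum]
  rw [Finset.sum_comm_pairs]
  simp only [mul_assoc]

section FrameAlgebra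

variable {R n m : Type*} [CommRing R] [Fintype n] [Fintype m] [DecidableEq m]

/-- `π = E g⁻¹ Eᵀ` with `g = EᵀE`: the projection onto the column space of `E`. -/
noncomputable def frameProj (E : Matrix n m R) : Matrix n n R :=
  E * (Eᵀ * E)⁻¹ * Eᵀ

/-- `∂_k π` when `∂_k E` has normal part `B`; the tangential part of `∂_k E` cancels out. -/
noncomputable def frameProjDeriv (E B : Matrix n m R) : Matrix n n R :=
  B * (Eᵀ * E)⁻¹ * Eᵀ + E * (Eᵀ * E)⁻¹ * Bᵀ

variable {E B B' : Matrix n m R}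

theorem frameProjDeriv_mul_self (hE : IsUnit (Eᵀ * E).det) (hB : Eᵀ * B = 0) :
    frameProjDeriv E B * E = B := by
  have hBE : Bᵀ * E = 0 := by rw [← transpose_transpose E, ← transpose_mul, hB]; simp
  simp only [frameProjDeriv, Matrix.add_mul, Matrix.mul_assoc, nonsing_inv_mul _ hE, hBE,
    Matrix.mul_one, Matrix.mul_zero, add_zero]

theorem frameProjDeriv_mul_frameProj_mul_transpose (hE : IsUnit (Eᵀ * E).det)
    (hB : Eᵀ * B = 0) (hB' : Eᵀ * B' = 0) :
    frameProjDeriv E B * frameProj E * (frameProjDeriv E B')ᵀ = B * (Eᵀ * E)⁻¹ * B'ᵀ := by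
  calc frameProjDeriv E B * frameProj E * (frameProjDeriv E B')ᵀ
      = frameProjDeriv E B * E * (Eᵀ * E)⁻¹ * (frameProjDeriv E B' * E)ᵀ := by
        simp only [frameProj, transpose_mul, Matrix.mul_assoc]
    _ = B * (Eᵀ * E)⁻¹ * B'ᵀ := by
        rw [frameProjDeriv_mul_self hE hB, frameProjDeriv_mul_self hE hB']

theorem contractedSandwich_frameProjDeriv_frameProj {c : Matrix m m R} {B : m → Matrix n m R}
    (hE : IsUnit (Eᵀ * E).det) (hB : ∀ k, Eᵀ * B k = 0) :
    contractedSandwich c (fun k => frameProjDeriv E (B k)) (frameProj E) =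
      contractedSandwich c B (Eᵀ * E)⁻¹ := by
  simp only [contractedSandwich, frameProjDeriv_mul_frameProj_mul_transpose hE (hB _) (hB _)]

end FrameAlgebra

section Euclidean

variable {n m : Type*} [Fintype n]

def frameMatrix (v : m → EuclideanSpace ℝ n) : Matrix n m ℝ :=
  of fun α i => v i α

theorem frameMatrix_transpose_mul (v w : m → EuclideanSpace ℝ n) :
    (frameMatrix v)ᵀ * frameMatrix w = of fun i j => ⟪v i, w j⟫ := by
  ext i j
  simp [frameMatrix, mul_apply, PiLp.inner_apply, mul_comm]

end Euclidean

/-- At a point in geodesic normal coordinates (`g = δ`),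
`Σ_{μ,ν} g^{kl} π_{μν} ∂_k π_{αμ} ∂_l π_{βν} = [g^{ij} g^{kl} A_{ik} ⊗ A_{jl}]_{αβ}`. -/
theorem contracted_pi_dpi_dpi (n m : ℕ)
    (DX : Fin m → EuclideanSpace ℝ (Fin n))
    (A : Fin m → Fin m → EuclideanSpace ℝ (Fin n))
    (g : Matrix (Fin m) (Fin m) ℝ) (hg : ∀ i j, g i j = ⟪DX i, DX j⟫)
    (hnormal : ∀ i j k, ⟪A i j, DX k⟫ = 0)
    (hgδ : g = 1)
    (π : Matrix (Fin n) (Fin n) ℝ)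
    (hπ : ∀ α β, π α β = ∑ i, ∑ j, g⁻¹ i j * DX i α * DX j β)
    (Dπ : Fin m → Matrix (Fin n) (Fin n) ℝ)
    (hDπ : ∀ k α β, Dπ k α β =
      ∑ i, ∑ j, g⁻¹ i j * (A i k α * DX j β + DX i α * A j k β)) :
    ∀ α β, ∑ μ, ∑ ν, ∑ k, ∑ l, g⁻¹ k l * π μ ν * Dπ k α μ * Dπ l β ν =
      ∑ i, ∑ j, ∑ k, ∑ l, g⁻¹ i j * g⁻¹ k l * (A i k α * A j l β) := by
  set E := frameMatrix DX
  set B : Fin m → Matrix (Fin n) (Fin m) ℝ := fun k => frameMatrix fun i => A i k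
  have hgE : g = Eᵀ * E := by
    rw [frameMatrix_transpose_mul]
    exact Matrix.ext hg
  have hE : IsUnit (Eᵀ * E).det := by
    rw [← hgE, hgδ, det_one]
    exact isUnit_one
  have hB : ∀ k, Eᵀ * B k = 0 := fun k => by
    rw [frameMatrix_transpose_mul]
    ext i j
    exact (real_inner_comm _ _).trans (hnormal j k i)
  have hπE : π = frameProj E := by
    ext a b
    rw [hπ, frameProj, ← hgE, mul_mul_transpose_apply]
    simp only [E, frameMatrix, of_apply, mul_assoc, mul_comm]
  have hDπE : Dπ = fun k => frameProjDeriv E (B k) := by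
    ext k a b
    rw [hDπ, frameProjDeriv, ← hgE, Matrix.add_apply, mul_mul_transpose_apply,
      mul_mul_transpose_apply, ← Finset.sum_add_distrib]
    simp only [E, B, frameMatrix, of_apply, mul_add, Finset.sum_add_distrib, mul_assoc, mul_comm,
      mul_left_comm]
  intro α β
  calc ∑ μ, ∑ ν, ∑ k, ∑ l, g⁻¹ k l * π μ ν * Dπ k α μ * Dπ l β ν
      = contractedSandwich g⁻¹ Dπ π α β := by
        rw [contractedSandwich_apply]
        simp only [mul_comm, mul_left_comm]
    _ = contractedSandwich g⁻¹ B g⁻¹ α β := by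
        rw [hπE, hDπE, contractedSandwich_frameProjDeriv_frameProj hE hB, hgE]
    _ = ∑ i, ∑ j, ∑ k, ∑ l, g⁻¹ i j * g⁻¹ k l * (A i k α * A j l β) := by
        rw [contractedSandwich_apply]
        simp only [B, frameMatrix, of_apply, mul_assoc, mul_comm]
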